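/- For every b ∈ P and 1 ≤ i ≤ n: if (b, α_i^∨) > 0 then T̄'_i(X_b) ≡ X_{s_i(b)} + X_b (mod Σ_+(b)); if (b, α_i^∨) = 0 then T̄'_i(X_b) = X_b; and if (b, α_i^∨) < 0 then T̄'_i(X_b) ≡ 0 (mod Σ_+(b)). -/

import Mathlib

open scoped RealInnerProductSpace Classical

noncomputable section

/-- Euclidean space ℝⁿ. -/
abbrev EV (n : ℕ) := EuclideanSpace ℝ (Fin n)

/-- ν_α = (α,α)/2. -/
def nuu {n : ℕ} (α : EV n) : ℝ := ⟪α, α⟫ / 2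

/-- α^∨ = 2α/(α,α). -/
def coroot {n : ℕ} (α : EV n) : EV n := (2 / ⟪α, α⟫) • α

/-- the reflection s_α. -/
def srefl {n : ℕ} (α : EV n) : EV n → EV n :=
  fun z => z - (2 * ⟪z, α⟫ / ⟪α, α⟫) • α

/-- the affine reflection s_ã attached to ã = [α, ν_α j], acting linearly on ℝⁿ × ℝ. -/
def aRefl {n : ℕ} (p : EV n × ℝ) : EV n × ℝ → EV n × ℝ :=
  fun z => z - (2 * ⟪z.1, p.1⟫ / ⟪p.1, p.1⟫) • p

/-- the translation element b' ∈ Ŵ, b'([z,ζ]) = [z, ζ − (z,b)]. -/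
def transl {n : ℕ} (b : EV n) : EV n × ℝ → EV n × ℝ :=
  fun z => (z.1, z.2 - ⟪z.1, b⟫)

/-- extension of a nonaffine transformation to ℝⁿ × ℝ. -/
def affExt {n : ℕ} (w : EV n → EV n) : EV n × ℝ → EV n × ℝ :=
  fun z => (w z.1, z.2)

/-- An irreducible reduced crystallographic root system in ℝⁿ, with a fixed system of
positive/simple roots, normalized so that (α,α) = 2 for short roots; `hishort` is the
highest short root ϑ and `hiroot` the highest root θ. -/
structure RootCtx (n : ℕ) where
  R : Finset (EV n)
  pos : Finset (EV n)
  simple : Fin n → EV n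
  hishort : EV n
  hiroot : EV n
  nonzero : ∀ α ∈ R, α ≠ (0 : EV n)
  neg_mem : ∀ α ∈ R, -α ∈ R
  reduced : ∀ α ∈ R, ∀ t : ℝ, t • α ∈ R → t = 1 ∨ t = -1
  crys : ∀ α ∈ R, ∀ β ∈ R, ∃ m : ℤ, 2 * ⟪β, α⟫ / ⟪α, α⟫ = (m : ℝ)
  reflect_mem : ∀ α ∈ R, ∀ β ∈ R, β - (2 * ⟪β, α⟫ / ⟪α, α⟫) • α ∈ R
  span_top : Submodule.span ℝ (R : Set (EV n)) = ⊤
  pos_subset : pos ⊆ R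
  pos_iff : ∀ α ∈ R, (α ∈ pos ↔ -α ∉ pos)
  simple_pos : ∀ i, simple i ∈ pos
  simple_inj : Function.Injective simple
  pos_sum : ∀ α ∈ pos, ∃ f : Fin n → ℕ, α = ∑ i, (f i : ℝ) • simple i
  irred : ∀ S : Finset (EV n), S ⊆ R → S.Nonempty →
      (∀ α ∈ S, ∀ β ∈ R, β ∉ S → ⟪α, β⟫ = 0) → S = R
  normalized : ∀ α ∈ R, (∀ β ∈ R, ⟪α, α⟫ ≤ ⟪β, β⟫) → ⟪α, α⟫ = 2
  hishort_pos : hishort ∈ pos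
  hishort_short : ⟪hishort, hishort⟫ = 2
  hishort_high : ∀ α ∈ R, ⟪α, α⟫ = 2 →
      ∃ f : Fin n → ℕ, hishort - α = ∑ i, (f i : ℝ) • simple i
  hiroot_pos : hiroot ∈ pos
  hiroot_high : ∀ α ∈ R, ∃ f : Fin n → ℕ, hiroot - α = ∑ i, (f i : ℝ) • simple i

namespace RootCtx

variable {n : ℕ} (c : RootCtx n)

/-- word in the simple reflections of W; the letters are listed in the order of
application (the first letter of the list acts first), so `[i₁, …, i_l]`
represents s_{i_l} ⋯ s_{i_1}. -/
def wWord (L : List (Fin n)) : EV n → EV n :=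
  L.foldl (fun f i => srefl (c.simple i) ∘ f) id

/-- membership in the Weyl group W. -/
def IsWeyl (w : EV n → EV n) : Prop := ∃ L : List (Fin n), w = c.wWord L

/-- λ(w) = {α ∈ R₊ : w(α) ∈ R₋}. -/
def lamW (w : EV n → EV n) : Finset (EV n) :=
  c.pos.filter (fun α => -(w α) ∈ c.pos)

/-- λ_ν(w). -/
def lamWnu (w : EV n → EV n) (ν : ℝ) : Finset (EV n) :=
  (c.lamW w).filter (fun α => nuu α = ν)

/-- the length l(w) = |λ(w)| of w ∈ W. -/
def lenW (w : EV n → EV n) : ℕ := (c.lamW w).card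

/-- ρ_ν = (1/2) Σ_{α ∈ R₊, ν_α = ν} α. -/
def rho (ν : ℝ) : EV n :=
  (1 / 2 : ℝ) • ∑ α ∈ c.pos.filter (fun α => nuu α = ν), α

/-- ρ_ν^∨ = ρ_ν / ν. -/
def rhoCheck (ν : ℝ) : EV n := ν⁻¹ • c.rho ν

/-- the affine root system R̃ ⊂ ℝⁿ × ℝ. -/
def aR : Set (EV n × ℝ) := {p | ∃ α ∈ c.R, ∃ j : ℤ, p = (α, nuu α * j)}

/-- positive affine roots. -/
def aPos : Set (EV n × ℝ) :=
  {p | p ∈ c.aR ∧ (0 < p.2 ∨ (p.2 = 0 ∧ p.1 ∈ c.pos))}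

/-- negative affine roots. -/
def aNeg : Set (EV n × ℝ) := {p | -p ∈ c.aPos}

/-- the affine simple roots α_0, α_1, …, α_n; the index 0 corresponds to
α₀ = [−ϑ, 1]. -/
def asimple : Fin (n + 1) → EV n × ℝ :=
  fun i => if h : i = 0 then (-c.hishort, (1 : ℝ)) else (c.simple (i.pred h), (0 : ℝ))

/-- the affine simple reflections s_0, s_1, …, s_n. -/
def aS (i : Fin (n + 1)) : EV n × ℝ → EV n × ℝ := aRefl (c.asimple i)

/-- word in the affine simple reflections (letters in order of application). -/
def affWord (L : List (Fin (n + 1))) : EV n × ℝ → EV n × ℝ :=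
  L.foldl (fun f i => c.aS i ∘ f) id

/-- the weight lattice P. -/
def PwSet : Set (EV n) :=
  {b | ∀ i, ∃ m : ℤ, 2 * ⟪b, c.simple i⟫ / ⟪c.simple i, c.simple i⟫ = (m : ℝ)}

/-- the dominant weights P₊. -/
def PplusSet : Set (EV n) :=
  {b | b ∈ c.PwSet ∧ ∀ i, 0 ≤ ⟪b, c.simple i⟫}

/-- membership in the extended affine Weyl group Ŵ = W ⋉ P,
via the normal form w·b' with w ∈ W and b ∈ P. -/
def IsExtW (f : EV n × ℝ → EV n × ℝ) : Prop :=
  ∃ w b, c.IsWeyl w ∧ b ∈ c.PwSet ∧ f = affExt w ∘ transl b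

/-- membership in Π = {π ∈ Ŵ : π(R̃₊) = R̃₊}. -/
def IsPi (f : EV n × ℝ → EV n × ℝ) : Prop :=
  c.IsExtW f ∧ f '' c.aPos = c.aPos

/-- the λ-set λ(ŵ) = R̃₊ ∩ ŵ⁻¹(R̃₋) of an affine transformation. -/
def aLam (f : EV n × ℝ → EV n × ℝ) : Set (EV n × ℝ) :=
  {p | p ∈ c.aPos ∧ f p ∈ c.aNeg}

/-- the ν-part λ_ν(ŵ). -/
def aLamNu (f : EV n × ℝ → EV n × ℝ) (ν : ℝ) : Set (EV n × ℝ) :=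
  {p | p ∈ c.aLam f ∧ nuu p.1 = ν}

/-- the length l(ŵ) = |λ(ŵ)|. -/
def aLen (f : EV n × ℝ → EV n × ℝ) : ℕ := (c.aLam f).ncard

/-- `(π, L)` is a reduced decomposition ŵ = π_r s_{i_l} ⋯ s_{i_1}: π ∈ Π and
the word length is minimal among all such presentations of the same element. -/
def IsReducedA (π : EV n × ℝ → EV n × ℝ) (L : List (Fin (n + 1))) : Prop :=
  c.IsPi π ∧
    ∀ (π' : EV n × ℝ → EV n × ℝ) (L' : List (Fin (n + 1))),
      c.IsPi π' → π' ∘ c.affWord L' = π ∘ c.affWord L → L.length ≤ L'.length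

/-- the λ-sequence α̃¹, α̃², … of a word (0-based indexing):
α̃^{k+1} = s_{i_1} s_{i_2} ⋯ s_{i_k}(α_{i_{k+1}}). -/
def lamSeq (L : List (Fin (n + 1))) (k : Fin L.length) : EV n × ℝ :=
  ((L.take k).foldr (fun i f => c.aS i ∘ f) id) (c.asimple (L.get k))

/-- the λ-sequence of a word in W (0-based indexing). -/
def lamSeqW (L : List (Fin n)) (k : Fin L.length) : EV n :=
  ((L.take k).foldr (fun i f => srefl (c.simple i) ∘ f) id) (c.simple (L.get k))

end RootCtx


/-! ### The group algebra k[P] of the weight lattice, in coordinates with respect to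
the fundamental weights, and the ingredients of the nil-affine Hecke operators. -/

/-- the weight lattice P in fundamental-weight coordinates. -/
abbrev WtLat (n : ℕ) := Fin n → ℤ

/-- the group algebra k[P], with basis X_b = `Xm k b`. -/
abbrev GA (k : Type) [CommRing k] (n : ℕ) := AddMonoidAlgebra k (WtLat n)

/-- the monomial X_b ∈ k[P]. -/
def Xm (k : Type) [CommRing k] {n : ℕ} (b : WtLat n) : GA k n :=
  AddMonoidAlgebra.single b 1

variable {n : ℕ}

/-- the coordinates of the simple root α_i: (α_i)_j = (α_i, α_j^∨) = `cart j i`. -/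
def aC (cart : Fin n → Fin n → ℤ) (i : Fin n) : WtLat n := fun j => cart j i

/-- the simple reflection s_i on the weight lattice: s_i(b) = b − (b,α_i^∨)·α_i. -/
def sC (cart : Fin n → Fin n → ℤ) (i : Fin n) (b : WtLat n) : WtLat n :=
  fun j => b j - b i * cart j i

/-- word in the simple reflections (letters in order of application). -/
def wordC (cart : Fin n → Fin n → ℤ) (L : List (Fin n)) : WtLat n → WtLat n :=
  L.foldl (fun f i => sC cart i ∘ f) id

/-- membership in W (acting on the weight lattice). -/
def IsWC (cart : Fin n → Fin n → ℤ) (w : WtLat n → WtLat n) : Prop :=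
  ∃ L, w = wordC cart L

/-- the Coxeter length. -/
def lenC (cart : Fin n → Fin n → ℤ) (w : WtLat n → WtLat n) : ℕ :=
  sInf {l | ∃ L : List (Fin n), L.length = l ∧ w = wordC cart L}

/-- antidominant weights. -/
def IsAntiC (b : WtLat n) : Prop := ∀ i, b i ≤ 0

/-- dominant weights. -/
def IsDomC (b : WtLat n) : Prop := ∀ i, 0 ≤ b i

/-- b < c, i.e. c − b ∈ Q₊ ∖ {0}. -/
def latLt (cart : Fin n → Fin n → ℤ) (b c' : WtLat n) : Prop :=
  b ≠ c' ∧ ∃ f : Fin n → ℕ, ∀ j, c' j - b j = ∑ i, (f i : ℤ) * cart j i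

/-- c' lies in the W-orbit of b. -/
def inOrb (cart : Fin n → Fin n → ℤ) (b c' : WtLat n) : Prop :=
  ∃ w, IsWC cart w ∧ c' = w b

/-- Σ₊(b): the span of the monomials X_c with b₋ < c₋. -/
def SigmaPlus (k : Type) [CommRing k] (cart : Fin n → Fin n → ℤ) (b : WtLat n) :
    Submodule k (GA k n) :=
  Submodule.span k
    {x | ∃ cc bm cm : WtLat n, inOrb cart b bm ∧ IsAntiC bm ∧
      inOrb cart cc cm ∧ IsAntiC cm ∧ latLt cart bm cm ∧ x = Xm k cc}

/-- the Bruhat order on W, via the subword property. -/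
def BruhatLe (cart : Fin n → Fin n → ℤ) (v w : WtLat n → WtLat n) : Prop :=
  ∃ Lw Lv : List (Fin n), wordC cart Lw = w ∧ Lw.length = lenC cart w ∧
    Lv.Sublist Lw ∧ wordC cart Lv = v


/-! Since `(X_{α_i} - 1) T̄'_i(X_b) = X_{b+α_i} - X_{s_i(b)}`, `T̄'_i(X_b)` is a geometric sum
over the `α_i`-string joining `b` and `s_i(b)`: its end points give the leading terms, and every
interior point `cc` satisfies `b₋ < cc₋`. Indeed, if `w(cc) = cc₋` then, `w(α_i)` being a positive
or a negative root, `cc₋` is some `z ∈ W b` plus a nonzero element of `Q₊`, while `z - b₋ ∈ Q₊`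
because `b₋` is reached from `z` by reflections lowering the height. -/

lemma srefl_norm (a x : EV n) : ‖srefl a x‖ = ‖x‖ := by
  rcases eq_or_ne a 0 with rfl | ha
  · simp [srefl]
  rw [← sq_eq_sq₀ (norm_nonneg _) (norm_nonneg _), ← real_inner_self_eq_norm_sq,
    ← real_inner_self_eq_norm_sq]
  simp only [srefl, inner_sub_left, inner_sub_right, real_inner_smul_left, real_inner_smul_right,
    real_inner_comm a x]
  field_simp
  ring

namespace RootCtx

variable (c : RootCtx n)

lemma simple_mem_R (i : Fin n) : c.simple i ∈ c.R := c.pos_subset (c.simple_pos i)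

lemma inner_simple_self_pos (i : Fin n) : 0 < ⟪c.simple i, c.simple i⟫ :=
  real_inner_self_pos.mpr (c.nonzero _ (c.simple_mem_R i))

lemma mem_pos_or_neg_mem_pos {α : EV n} (h : α ∈ c.R) : α ∈ c.pos ∨ -α ∈ c.pos := by
  by_contra! hα
  exact hα.1 ((c.pos_iff α h).mpr hα.2)

lemma span_range_simple : Submodule.span ℝ (Set.range c.simple) = ⊤ := by
  refine eq_top_iff.mpr (c.span_top ▸ Submodule.span_le.mpr fun α hα => ?_)
  have hcone : ∀ β ∈ c.pos, β ∈ Submodule.span ℝ (Set.range c.simple) := fun β hβ => by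
    obtain ⟨f, rfl⟩ := c.pos_sum β hβ
    exact Submodule.sum_mem _ fun i _ => Submodule.smul_mem _ _ (Submodule.subset_span ⟨i, rfl⟩)
  rcases c.mem_pos_or_neg_mem_pos hα with h | h
  · exact hcone α h
  · simpa using Submodule.neg_mem _ (hcone _ h)

/-- The coordinates `(x, α_j^∨)` of `x` in the basis of fundamental weights. -/
def corootCoord : EV n →ₗ[ℝ] (Fin n → ℝ) where
  toFun x j := 2 * ⟪x, c.simple j⟫ / ⟪c.simple j, c.simple j⟫
  map_add' x y := by funext j; simp only [inner_add_left, Pi.add_apply]; ring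
  map_smul' r x := by funext j; simp only [real_inner_smul_left, Pi.smul_apply, smul_eq_mul,
    RingHom.id_apply]; ring

lemma corootCoord_apply (x : EV n) (j : Fin n) :
    c.corootCoord x j = 2 * ⟪x, c.simple j⟫ / ⟪c.simple j, c.simple j⟫ := rfl

lemma corootCoord_injective : Function.Injective c.corootCoord := by
  refine (injective_iff_map_eq_zero _).mpr fun x hx => ?_
  have hperp : Submodule.span ℝ (Set.range c.simple) ≤ LinearMap.ker (innerₛₗ ℝ x) := by
    refine Submodule.span_le.mpr ?_
    rintro _ ⟨j, rfl⟩
    have hj := congrFun hx j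
    rw [corootCoord_apply, Pi.zero_apply, div_eq_zero_iff,
      or_iff_left (c.inner_simple_self_pos j).ne', mul_eq_zero, or_iff_right two_ne_zero] at hj
    exact hj
  have hx : ⟪x, x⟫ = 0 := by
    simpa using hperp (c.span_range_simple ▸ Submodule.mem_top : x ∈ _)
  exact inner_self_eq_zero.mp hx

def corootCoordEquiv : EV n ≃ₗ[ℝ] (Fin n → ℝ) :=
  LinearMap.linearEquivOfInjective _ c.corootCoord_injective (by simp)

/-- The realization of the weight lattice in `ℝⁿ`: `b ↦ ∑ b_j ω_j`. -/
def weightVec : WtLat n →+ EV n :=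
  c.corootCoordEquiv.symm.toLinearMap.toAddMonoidHom.comp
    (AddMonoidHom.compLeft (Int.castAddHom ℝ) (Fin n))

lemma corootCoord_weightVec (b : WtLat n) (j : Fin n) :
    c.corootCoord (c.weightVec b) j = b j := by
  have := c.corootCoordEquiv.apply_symm_apply (fun j => (b j : ℝ))
  exact congrFun this j

lemma weightVec_injective : Function.Injective c.weightVec := fun b b' h => by
  funext j
  exact_mod_cast (c.corootCoord_weightVec b j).symm.trans
    ((congrArg (c.corootCoord · j) h).trans (c.corootCoord_weightVec b' j))

end RootCtx

lemma sC_eq (cart : Fin n → Fin n → ℤ) (i : Fin n) (b : WtLat n) :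
    sC cart i b = b - b i • aC cart i := rfl

lemma sC_add (cart : Fin n → Fin n → ℤ) (i : Fin n) (b b' : WtLat n) :
    sC cart i (b + b') = sC cart i b + sC cart i b' := by
  simp only [sC_eq, Pi.add_apply, add_smul]
  abel

lemma sC_sC {cart : Fin n → Fin n → ℤ} {i : Fin n} (hii : cart i i = 2) (b : WtLat n) :
    sC cart i (sC cart i b) = b := by
  funext j
  simp only [sC, hii]
  ring

lemma foldl_sC_comp (cart : Fin n → Fin n → ℤ) (L : List (Fin n)) (g : WtLat n → WtLat n) :
    L.foldl (fun f i => sC cart i ∘ f) g = wordC cart L ∘ g := by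
  induction L generalizing g with
  | nil => rfl
  | cons i L ih =>
    show L.foldl _ (sC cart i ∘ g) = L.foldl _ (sC cart i ∘ id) ∘ g
    rw [ih, ih]
    rfl

lemma wordC_cons (cart : Fin n → Fin n → ℤ) (i : Fin n) (L : List (Fin n)) (b : WtLat n) :
    wordC cart (i :: L) b = wordC cart L (sC cart i b) := by
  rw [wordC, List.foldl_cons, foldl_sC_comp]
  rfl

lemma wordC_append (cart : Fin n → Fin n → ℤ) (L L' : List (Fin n)) (b : WtLat n) :
    wordC cart (L ++ L') b = wordC cart L' (wordC cart L b) := by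
  induction L generalizing b with
  | nil => rfl
  | cons i L ih => rw [List.cons_append, wordC_cons, wordC_cons, ih]

lemma wordC_add (cart : Fin n → Fin n → ℤ) (L : List (Fin n)) (b b' : WtLat n) :
    wordC cart L (b + b') = wordC cart L b + wordC cart L b' := by
  induction L generalizing b b' with
  | nil => rfl
  | cons i L ih => rw [wordC_cons, wordC_cons, wordC_cons, sC_add, ih]

def wordCHom (cart : Fin n → Fin n → ℤ) (L : List (Fin n)) : WtLat n →+ WtLat n :=
  AddMonoidHom.mk' (wordC cart L) (wordC_add cart L)

lemma inOrb_refl (cart : Fin n → Fin n → ℤ) (b : WtLat n) : inOrb cart b b :=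
  ⟨_, ⟨[], rfl⟩, rfl⟩

lemma inOrb_wordC (cart : Fin n → Fin n → ℤ) (L : List (Fin n)) (b : WtLat n) :
    inOrb cart b (wordC cart L b) :=
  ⟨_, ⟨L, rfl⟩, rfl⟩

lemma inOrb.trans {cart : Fin n → Fin n → ℤ} {b b' b'' : WtLat n} (h : inOrb cart b b')
    (h' : inOrb cart b' b'') : inOrb cart b b'' := by
  obtain ⟨-, ⟨L, rfl⟩, rfl⟩ := h
  obtain ⟨-, ⟨L', rfl⟩, rfl⟩ := h'
  exact ⟨_, ⟨L ++ L', rfl⟩, (wordC_append cart L L' b).symm⟩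

lemma inOrb_wordC_left {cart : Fin n → Fin n → ℤ} (hdiag : ∀ i, cart i i = 2)
    (L : List (Fin n)) (b : WtLat n) : inOrb cart (wordC cart L b) b := by
  induction L generalizing b with
  | nil => exact inOrb_refl cart b
  | cons i L ih =>
    rw [wordC_cons]
    refine (ih _).trans ?_
    simpa [wordC, sC_sC (hdiag i)] using inOrb_wordC cart [i] (sC cart i b)

lemma inOrb.symm {cart : Fin n → Fin n → ℤ} (hdiag : ∀ i, cart i i = 2) {b b' : WtLat n}
    (h : inOrb cart b b') : inOrb cart b' b := by
  obtain ⟨-, ⟨L, rfl⟩, rfl⟩ := h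
  exact inOrb_wordC_left hdiag L b

lemma SigmaPlus_eq_of_inOrb (k : Type) [CommRing k] {cart : Fin n → Fin n → ℤ}
    (hdiag : ∀ i, cart i i = 2) {b b' : WtLat n} (h : inOrb cart b b') :
    SigmaPlus k cart b' = SigmaPlus k cart b := by
  have horb : ∀ bm, inOrb cart b' bm ↔ inOrb cart b bm :=
    fun bm => ⟨(h.trans ·), ((h.symm hdiag).trans ·)⟩
  simp only [SigmaPlus, horb]

lemma SigmaPlus_sC (k : Type) [CommRing k] {cart : Fin n → Fin n → ℤ}
    (hdiag : ∀ i, cart i i = 2) (i : Fin n) (b : WtLat n) :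
    SigmaPlus k cart (sC cart i b) = SigmaPlus k cart b :=
  SigmaPlus_eq_of_inOrb k hdiag (inOrb_wordC cart [i] b)

def qPlus (cart : Fin n → Fin n → ℤ) : AddSubmonoid (WtLat n) :=
  AddSubmonoid.closure (Set.range (aC cart))

lemma latLt_iff (cart : Fin n → Fin n → ℤ) (b b' : WtLat n) :
    latLt cart b b' ↔ b ≠ b' ∧ b' - b ∈ qPlus cart := by
  simp only [latLt, qPlus, AddSubmonoid.mem_closure_range_iff_of_fintype, funext_iff,
    Finset.sum_apply, Pi.smul_apply, Pi.sub_apply, aC, Int.nsmul_eq_mul]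

lemma aC_mem_qPlus (cart : Fin n → Fin n → ℤ) (i : Fin n) : aC cart i ∈ qPlus cart :=
  AddSubmonoid.subset_closure (Set.mem_range_self i)

lemma aC_ne_zero {cart : Fin n → Fin n → ℤ} {i : Fin n} (hii : cart i i = 2) : aC cart i ≠ 0 :=
  fun h => by simpa [aC, hii] using congrFun h i

namespace RootCtx

variable (c : RootCtx n)

def IsCartanMatrix (cart : Fin n → Fin n → ℤ) : Prop :=
  ∀ i j, (cart i j : ℝ) = 2 * ⟪c.simple j, c.simple i⟫ / ⟪c.simple i, c.simple i⟫

variable {c} {cart : Fin n → Fin n → ℤ}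

lemma IsCartanMatrix.diag (hcart : c.IsCartanMatrix cart) (i : Fin n) : cart i i = 2 := by
  have h := hcart i i
  rw [mul_div_assoc, div_self (c.inner_simple_self_pos i).ne', mul_one] at h
  exact_mod_cast h

lemma weightVec_aC (hcart : c.IsCartanMatrix cart) (i : Fin n) :
    c.weightVec (aC cart i) = c.simple i :=
  c.corootCoord_injective <| funext fun j => by
    rw [corootCoord_weightVec, aC, hcart, corootCoord_apply, real_inner_comm]

lemma weightVec_sC (hcart : c.IsCartanMatrix cart) (i : Fin n) (b : WtLat n) :
    c.weightVec (sC cart i b) = srefl (c.simple i) (c.weightVec b) := by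
  rw [sC_eq, map_sub, map_zsmul, weightVec_aC hcart, srefl, ← corootCoord_apply,
    corootCoord_weightVec, Int.cast_smul_eq_zsmul]

lemma norm_weightVec_sC (hcart : c.IsCartanMatrix cart) (i : Fin n) (b : WtLat n) :
    ‖c.weightVec (sC cart i b)‖ = ‖c.weightVec b‖ := by
  rw [weightVec_sC hcart, srefl_norm]

lemma weightVec_wordC_mem_R (hcart : c.IsCartanMatrix cart) (L : List (Fin n)) {d : WtLat n}
    (hd : c.weightVec d ∈ c.R) : c.weightVec (wordC cart L d) ∈ c.R := by
  induction L generalizing d with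
  | nil => exact hd
  | cons i L ih =>
    rw [wordC_cons]
    exact ih (weightVec_sC hcart i d ▸ c.reflect_mem _ (c.simple_mem_R i) _ hd)

lemma mem_qPlus_of_weightVec_mem_pos (hcart : c.IsCartanMatrix cart) {d : WtLat n}
    (hd : c.weightVec d ∈ c.pos) : d ∈ qPlus cart := by
  obtain ⟨f, hf⟩ := c.pos_sum _ hd
  rw [qPlus, AddSubmonoid.mem_closure_range_iff_of_fintype]
  refine ⟨f, c.weightVec_injective ?_⟩
  simp only [hf, map_sum, map_nsmul, weightVec_aC hcart, Nat.cast_smul_eq_nsmul]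

variable (c)

def rhoCoroot : EV n := c.corootCoordEquiv.symm fun j => 2 / ⟪c.simple j, c.simple j⟫

lemma inner_simple_rhoCoroot (j : Fin n) : ⟪c.simple j, c.rhoCoroot⟫ = 1 := by
  have h := congrFun (c.corootCoordEquiv.apply_symm_apply
    fun j => 2 / ⟪c.simple j, c.simple j⟫) j
  change c.corootCoord c.rhoCoroot j = _ at h
  rw [corootCoord_apply, div_left_inj' (c.inner_simple_self_pos j).ne'] at h
  rw [real_inner_comm]
  linarith

def height : WtLat n →+ ℝ :=
  (innerₛₗ ℝ c.rhoCoroot).toAddMonoidHom.comp c.weightVec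

lemma height_apply (d : WtLat n) : c.height d = ⟪c.rhoCoroot, c.weightVec d⟫ := rfl

variable {c}

lemma height_aC (hcart : c.IsCartanMatrix cart) (i : Fin n) : c.height (aC cart i) = 1 := by
  rw [height_apply, weightVec_aC hcart, real_inner_comm, inner_simple_rhoCoroot]

lemma height_sC (hcart : c.IsCartanMatrix cart) (i : Fin n) (b : WtLat n) :
    c.height (sC cart i b) = c.height b - b i := by
  rw [sC_eq, map_sub, map_zsmul, height_aC hcart, zsmul_one]

lemma height_eq_sum (hcart : c.IsCartanMatrix cart) (f : Fin n → ℕ) :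
    c.height (∑ i, f i • aC cart i) = ∑ i, (f i : ℝ) := by
  rw [map_sum]
  exact Finset.sum_congr rfl fun i _ => by rw [map_nsmul, height_aC hcart, nsmul_one]

lemma height_nonneg (hcart : c.IsCartanMatrix cart) {d : WtLat n} (hd : d ∈ qPlus cart) :
    0 ≤ c.height d := by
  obtain ⟨f, rfl⟩ := AddSubmonoid.mem_closure_range_iff_of_fintype.mp hd
  rw [height_eq_sum hcart]
  positivity

lemma height_pos (hcart : c.IsCartanMatrix cart) {d : WtLat n} (hd : d ∈ qPlus cart)
    (hd0 : d ≠ 0) : 0 < c.height d := by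
  obtain ⟨f, rfl⟩ := AddSubmonoid.mem_closure_range_iff_of_fintype.mp hd
  rw [height_eq_sum hcart]
  refine lt_of_le_of_ne (by positivity) fun h => hd0 ?_
  have hf := (Finset.sum_eq_zero_iff_of_nonneg fun i _ => Nat.cast_nonneg (f i)).mp h.symm
  simp_all

variable (c) in
lemma finite_setOf_norm_weightVec_le (r : ℝ) : {z : WtLat n | ‖c.weightVec z‖ ≤ r}.Finite := by
  set C := ‖LinearMap.toContinuousLinearMap c.corootCoord‖
  obtain ⟨K, hK⟩ := exists_nat_ge (C * r)
  refine (Set.Finite.pi (t := fun _ => Set.Icc (-(K : ℤ)) K) fun _ => Set.finite_Icc _ _).subset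
    fun z hz j _ => ?_
  have hj : |(z j : ℝ)| ≤ C * r := by
    rw [← c.corootCoord_weightVec z j, ← Real.norm_eq_abs]
    calc ‖c.corootCoord (c.weightVec z) j‖ ≤ ‖c.corootCoord (c.weightVec z)‖ := norm_le_pi_norm _ j
      _ ≤ C * ‖c.weightVec z‖ := (LinearMap.toContinuousLinearMap c.corootCoord).le_opNorm _
      _ ≤ C * r := mul_le_mul_of_nonneg_left hz (norm_nonneg _)
  obtain ⟨hlo, hhi⟩ := abs_le.mp (hj.trans hK)
  exact ⟨by exact_mod_cast hlo, by exact_mod_cast hhi⟩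

lemma exists_antidominant_mem_orbit (hcart : c.IsCartanMatrix cart) (b : WtLat n) :
    ∃ bm, inOrb cart b bm ∧ IsAntiC bm ∧ b - bm ∈ qPlus cart := by
  -- Reflections preserve length, and only finitely many weights have bounded length.
  have hwf : {z | ‖c.weightVec z‖ ≤ ‖c.weightVec b‖}.WellFoundedOn
      (Function.onFun (· < ·) ⇑c.height) :=
    Set.wellFoundedOn_image.mp
      ((c.finite_setOf_norm_weightVec_le ‖c.weightVec b‖).image c.height).wellFoundedOn
  refine hwf.induction (P := fun y => ∃ bm, inOrb cart y bm ∧ IsAntiC bm ∧ y - bm ∈ qPlus cart)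
    (show ‖c.weightVec b‖ ≤ _ from le_rfl) fun y hy ih => ?_
  by_cases hanti : IsAntiC y
  · exact ⟨y, inOrb_refl cart y, hanti, by rw [sub_self]; exact zero_mem _⟩
  obtain ⟨i, hi⟩ : ∃ i, 0 < y i := by simpa [IsAntiC] using hanti
  obtain ⟨bm, horb, hbm, hq⟩ := ih (sC cart i y)
    (show ‖_‖ ≤ _ by rwa [norm_weightVec_sC hcart]) (by
      rw [Function.onFun, height_sC hcart]
      exact sub_lt_self _ (Int.cast_pos.mpr hi))
  refine ⟨bm, (inOrb_wordC cart [i] y).trans horb, hbm, ?_⟩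
  have hsplit : y - bm = (y i).toNat • aC cart i + (sC cart i y - bm) := by
    rw [sC_eq, ← natCast_zsmul, Int.toNat_of_nonneg hi.le]
    abel
  rw [hsplit]
  exact add_mem (nsmul_mem (aC_mem_qPlus cart i) _) hq

lemma ne_zero_of_weightVec_mem_pos {γ : WtLat n} (hγ : c.weightVec γ ∈ c.pos) : γ ≠ 0 := by
  rintro rfl
  exact c.nonzero _ (c.pos_subset hγ) (map_zero _)

lemma Xm_mem_SigmaPlus_of_sub_mem_qPlus (k : Type) [CommRing k] (hcart : c.IsCartanMatrix cart)
    {b z cc cm : WtLat n} (hz : inOrb cart b z) (hcm : inOrb cart cc cm) (hanti : IsAntiC cm)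
    (hd : cm - z ∈ qPlus cart) (hne : cm ≠ z) : Xm k cc ∈ SigmaPlus k cart b := by
  obtain ⟨bm, hzbm, hbm, hzq⟩ := exists_antidominant_mem_orbit hcart z
  have hsum : cm - bm = (cm - z) + (z - bm) := by abel
  have hlt : latLt cart bm cm := by
    refine (latLt_iff cart bm cm).mpr ⟨fun h => ?_, hsum ▸ add_mem hd hzq⟩
    have hpos := height_pos hcart hd (sub_ne_zero.mpr hne)
    have hnonneg := height_nonneg hcart hzq
    have hzero : c.height (cm - bm) = 0 := by rw [h, sub_self, map_zero]
    rw [hsum, map_add] at hzero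
    linarith
  exact Submodule.subset_span ⟨cc, bm, cm, hz.trans hzbm, hbm, hcm, hanti, hlt, rfl⟩

lemma Xm_mem_SigmaPlus_of_mem_string (k : Type) [CommRing k] (hcart : c.IsCartanMatrix cart)
    {b cc : WtLat n} {i : Fin n} {j p : ℕ} (hj : 0 < j) (hp : 0 < p)
    (hb : cc + j • aC cart i = b) (hsb : cc - p • aC cart i = sC cart i b) :
    Xm k cc ∈ SigmaPlus k cart b := by
  obtain ⟨-, ⟨-, ⟨L, rfl⟩, rfl⟩, hanti, -⟩ := exists_antidominant_mem_orbit hcart cc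
  set w := wordCHom cart L
  -- `w cc = w (s_i b) + p • w α_i = w b - j • w α_i`, and `w α_i` is a positive or a negative root.
  have hstring : ∀ z γ (q : ℕ), 0 < q → inOrb cart b z → c.weightVec γ ∈ c.pos →
      w cc = z + q • γ → Xm k cc ∈ SigmaPlus k cart b := by
    intro z γ q hq hz hγ h
    refine Xm_mem_SigmaPlus_of_sub_mem_qPlus k hcart hz (inOrb_wordC cart L cc) hanti ?_ ?_
    · rw [show wordC cart L cc = w cc from rfl, h, add_sub_cancel_left]
      exact nsmul_mem (mem_qPlus_of_weightVec_mem_pos hcart hγ) q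
    · rw [show wordC cart L cc = w cc from rfl, h, Ne, add_eq_left]
      exact smul_ne_zero hq.ne' (ne_zero_of_weightVec_mem_pos hγ)
  have hroot : c.weightVec (w (aC cart i)) ∈ c.R :=
    weightVec_wordC_mem_R hcart L (weightVec_aC hcart i ▸ c.simple_mem_R i)
  rcases c.mem_pos_or_neg_mem_pos hroot with hpos | hneg
  · refine hstring _ _ p hp (inOrb_wordC cart (i :: L) b) hpos ?_
    rw [wordC_cons, ← hsb]
    change w cc = w (cc - p • aC cart i) + p • w (aC cart i)
    rw [map_sub, map_nsmul, sub_add_cancel]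
  · refine hstring _ (-w (aC cart i)) j hj (inOrb_wordC cart L b) (by rwa [map_neg]) ?_
    rw [← hb]
    change w cc = w (cc + j • aC cart i) + j • -w (aC cart i)
    rw [map_add, map_nsmul, smul_neg, add_neg_cancel_right]

lemma sum_Xm_string_mem_SigmaPlus (k : Type) [CommRing k] (hcart : c.IsCartanMatrix cart)
    {b : WtLat n} {i : Fin n} {m : ℕ} (hb : sC cart i b + (m + 1) • aC cart i = b) :
    ∑ t ∈ Finset.range m, Xm k (sC cart i b + (t + 1) • aC cart i) ∈ SigmaPlus k cart b := by
  refine Submodule.sum_mem _ fun t ht => ?_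
  have ht := Finset.mem_range.mp ht
  refine Xm_mem_SigmaPlus_of_mem_string k hcart (j := m - t) (p := t + 1) (by omega) (by omega)
    ?_ (add_sub_cancel_right _ _)
  rw [add_assoc, ← add_smul, show t + 1 + (m - t) = m + 1 by omega, hb]

end RootCtx

lemma Xm_add (k : Type) [CommRing k] (a b : WtLat n) : Xm k (a + b) = Xm k a * Xm k b := by
  simp [Xm, AddMonoidAlgebra.single_mul_single]

lemma Xm_nsmul (k : Type) [CommRing k] (m : ℕ) (a : WtLat n) : Xm k (m • a) = Xm k a ^ m := by
  simp [Xm, AddMonoidAlgebra.single_pow]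

lemma Xm_sub_one_ne_zero (k : Type) [CommRing k] [Nontrivial k] {a : WtLat n} (ha : a ≠ 0) :
    Xm k a - 1 ≠ 0 :=
  sub_ne_zero.mpr fun h => ha ((AddMonoidAlgebra.single_left_inj one_ne_zero).mp h)

lemma Xm_sub_one_mul_sum (k : Type) [CommRing k] (a x : WtLat n) (M : ℕ) :
    (Xm k a - 1) * ∑ t ∈ Finset.range M, Xm k (x + (t + 1) • a)
      = Xm k (x + (M + 1) • a) - Xm k (x + a) := by
  simp only [succ_nsmul', ← add_assoc, Xm_add k (x + a), Xm_nsmul, ← Finset.mul_sum]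
  rw [mul_left_comm, mul_geom_sum, mul_sub, mul_one]

theorem nil_DL_on_monomials_general {n : ℕ} (k : Type) [Field k]
    (c : RootCtx n) (cart : Fin n → Fin n → ℤ)
    (hcart : ∀ i j, (cart i j : ℝ)
      = 2 * ⟪c.simple j, c.simple i⟫ / ⟪c.simple i, c.simple i⟫)
    (sA : Fin n → (GA k n →ₐ[k] GA k n))
    (hsA : ∀ i b, sA i (Xm k b) = Xm k (sC cart i b))
    (T : Fin n → (GA k n →ₗ[k] GA k n))
    (hT : ∀ i f, (Xm k (aC cart i) - 1) * T i f = Xm k (aC cart i) * f - sA i f)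
    (b : WtLat n) (i : Fin n) :
    (0 < b i → T i (Xm k b) - (Xm k (sC cart i b) + Xm k b) ∈ SigmaPlus k cart b) ∧
    (b i = 0 → T i (Xm k b) = Xm k b) ∧
    (b i < 0 → T i (Xm k b) ∈ SigmaPlus k cart b) := by
  have hcart : c.IsCartanMatrix cart := hcart
  set α := aC cart i
  have hT_eq : ∀ y, (Xm k α - 1) * y = Xm k (b + α) - Xm k (sC cart i b) → T i (Xm k b) = y :=
    fun y hy => mul_left_cancel₀ (Xm_sub_one_ne_zero k (aC_ne_zero (hcart.diag i)))
      (by rw [hT, hsA, hy, Xm_add, mul_comm])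
  refine ⟨fun hbi => ?_, fun hbi => ?_, fun hbi => ?_⟩
  · obtain ⟨m, hm⟩ : ∃ m : ℕ, b i = m + 1 := ⟨(b i - 1).toNat, by omega⟩
    have hsb : sC cart i b + (m + 1) • α = b := by
      rw [sC_eq, hm, ← natCast_zsmul, Nat.cast_succ, sub_add_cancel]
    rw [hT_eq (Xm k b + Xm k (sC cart i b) + ∑ t ∈ Finset.range m, Xm k (sC cart i b + (t + 1) • α))
      (by rw [mul_add, mul_add, Xm_sub_one_mul_sum, hsb, Xm_add k b, Xm_add k (sC cart i b)]; ring),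
      add_comm (Xm k b), add_sub_cancel_left]
    exact RootCtx.sum_Xm_string_mem_SigmaPlus k hcart hsb
  · have hsb : sC cart i b = b := by rw [sC_eq, hbi, zero_smul, sub_zero]
    exact hT_eq _ (by rw [hsb, Xm_add, sub_one_mul, mul_comm])
  · obtain ⟨m, hm⟩ : ∃ m : ℕ, b i = -(m + 1) := ⟨(-b i - 1).toNat, by omega⟩
    have hsb : b + (m + 1) • α = sC cart i b := by
      rw [sC_eq, hm, ← natCast_zsmul, Nat.cast_succ, neg_smul, sub_neg_eq_add]
    rw [hT_eq (-∑ t ∈ Finset.range m, Xm k (b + (t + 1) • α))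
      (by rw [mul_neg, Xm_sub_one_mul_sum, hsb, neg_sub])]
    have hmem := RootCtx.sum_Xm_string_mem_SigmaPlus k hcart (b := sC cart i b) (m := m)
      (by rwa [sC_sC (hcart.diag i)])
    rw [sC_sC (hcart.diag i), SigmaPlus_sC k hcart.diag] at hmem
    exact neg_mem hmem

/-- formula (2.37).  For b ∈ P and 1 ≤ i ≤ n, modulo Σ₊(b) the
operator T̄'_i (with (X_{α_i}−1)·T̄'_i(f) = X_{α_i}·f − s_i(f)) satisfies:
T̄'_i(X_b) ≡ X_{s_i(b)} + X_b if (b,α_i^∨) > 0; T̄'_i(X_b) = X_b if (b,α_i^∨) = 0;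
and T̄'_i(X_b) ≡ 0 if (b,α_i^∨) < 0. -/
theorem nil_DL_on_monomials {n : ℕ} (k : Type) [Field k] [CharZero k]
    (c : RootCtx n) (cart : Fin n → Fin n → ℤ)
    (hcart : ∀ i j, (cart i j : ℝ)
      = 2 * ⟪c.simple j, c.simple i⟫ / ⟪c.simple i, c.simple i⟫)
    (sA : Fin n → (GA k n →ₐ[k] GA k n))
    (hsA : ∀ i b, sA i (Xm k b) = Xm k (sC cart i b))
    (T : Fin n → (GA k n →ₗ[k] GA k n))
    (hT : ∀ i f, (Xm k (aC cart i) - 1) * T i f = Xm k (aC cart i) * f - sA i f)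
    (b : WtLat n) (i : Fin n) :
    (0 < b i → T i (Xm k b) - (Xm k (sC cart i b) + Xm k b) ∈ SigmaPlus k cart b) ∧
    (b i = 0 → T i (Xm k b) = Xm k b) ∧
    (b i < 0 → T i (Xm k b) ∈ SigmaPlus k cart b) :=
  nil_DL_on_monomials_general k c cart hcart sA hsA T hT b i
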